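/- Let f : ℝ → ℝ be differentiable on [0, ∞) with 4x(f′(x))² < 1 for all x ≥ 0 (f is elliptic). Let k₁, k₂ ∈ ℝ be such that, setting H = (k₁ + k₂)/2 and x = H² − k₁k₂, one has H = f(x). Then x ≥ 0 and the two coefficients (1 − 2 f(x) f′(x))/2 + f′(x) k₁ and (1 − 2 f(x) f′(x))/2 + f′(x) k₂ are both strictly positive. (This is the algebraic content of Lemma 2.6: for a surface whose principal curvatures k₁, k₂ satisfy the special Weingarten relation H = f(H² − K_e), the eigenvalues of the linearized operator L_f = ((1 − 2ff′)/2)Δ + f′ L₁ are positive, i.e. L_f is elliptic.) -/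
import Mathlib

/-- Algebraic content of Lemma 2.6: if `f` is elliptic (`4x f′(x)² < 1` on `[0,∞)`)
and the principal curvatures `k₁, k₂` satisfy the special Weingarten relation
`H = f(H² − k₁k₂)` with `H = (k₁+k₂)/2`, then `x = H² − k₁k₂ ≥ 0` and the
eigenvalue coefficients `(1 − 2ff′)/2 + f′kᵢ` of the linearized operator `L_f`
are strictly positive. -/
theorem Lf_elliptic (f f' : ℝ → ℝ)
    (hf : ∀ x ≥ (0 : ℝ), HasDerivWithinAt f (f' x) (Set.Ici 0) x)
    (hell : ∀ x ≥ (0 : ℝ), 4 * x * (f' x) ^ 2 < 1)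
    (k₁ k₂ : ℝ) (H x : ℝ) (hH : H = (k₁ + k₂) / 2) (hx : x = H ^ 2 - k₁ * k₂)
    (hW : H = f x) :
    0 ≤ x ∧
    0 < (1 - 2 * f x * f' x) / 2 + f' x * k₁ ∧
    0 < (1 - 2 * f x * f' x) / 2 + f' x * k₂ := by
  have hxd : x = ((k₁ - k₂) / 2) ^ 2 := by rw [hx, hH]; ring
  have hx0 : 0 ≤ x := hxd ▸ sq_nonneg _
  have he := hell x hx0
  refine ⟨hx0, ?_, ?_⟩ <;> rw [← hW, hH] <;>
    nlinarith [he, hxd, sq_nonneg (f' x * (k₁ - k₂) + 1), sq_nonneg (f' x * (k₂ - k₁) + 1)]
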